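/- Let N = 1, p ≥ 1, and δ, ε > 0 sufficiently small. Define u : ℝ → ℝ by u = δ on (−2,−1], linear on [−1,−1+δ], u = −2εδ on [−1+δ, 0), u = −εδ on (0,1), u = δ − εδ on (1,2), and u = 0 elsewhere. Let H = [0,∞) and u^H the polarization with respect to the reflection x ↦ −x. Then I_δ(u^H) > I_δ(u), where I_δ(v) = ∫∫_{{|v(y)−v(x)|>δ}} δ^p |x−y|^{−1−p} dx dy. In particular, polarization can strictly increase I_δ. -/

import Mathlib

open MeasureTheory
open scoped ENNReal

/-- The nonlocal energy `I_δ` in dimension one. -/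
noncomputable def Idel (p δ : ℝ) (v : ℝ → ℝ) : ℝ≥0∞ :=
  ∫⁻ x : ℝ, ∫⁻ y : ℝ, if δ < |v x - v y| then ENNReal.ofReal (δ ^ p / |x - y| ^ (1 + p)) else 0

/-- The counterexample function of the paper, depending on parameters `δ, ε`. -/
noncomputable def uEx (δ ε : ℝ) : ℝ → ℝ := fun x =>
  if -2 < x ∧ x ≤ -1 then δ
  else if -1 < x ∧ x < -1 + δ then δ + ((x + 1) / δ) * (-2 * ε * δ - δ)
  else if -1 + δ ≤ x ∧ x < 0 then -2 * ε * δ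
  else if 0 < x ∧ x < 1 then -ε * δ
  else if 1 < x ∧ x < 2 then δ - ε * δ
  else 0

/-- Polarization with respect to `H = [0, ∞)` and the reflection `x ↦ -x`. -/
noncomputable def polar1d (v : ℝ → ℝ) : ℝ → ℝ := fun x =>
  if 0 ≤ x then max (v x) (v (-x)) else min (v x) (v (-x))

/-!
`I_δ(v)` is the mass of `{(x, y) | δ < |v x - v y|}` under the measure `kernelMeasure p δ` on
`ℝ × ℝ` with density `δ ^ p / |x - y| ^ (1 + p)`.

For `u = uEx δ ε` the jumps above `δ` occur only between the plateaus `(-2, -1)` and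
`[-1 + δ, 0)` (where `u` is `δ` and `-2εδ`), between a point of the ramp within `2εδ` of one of its
ends and a point at distance `≥ δ / 2`, or between points of `(-2, 2)` at distance `≥ 1 / 2`.
Beyond the plateau part, these pairs have mass `O(εδ)` and `O(δ ^ p)`.

The polarization keeps the plateau jumps (now of size `δ + εδ`) and creates jumps of size `δ + εδ`
between `(1, 2)`, where it equals `δ`, and `(0, 1 - δ]`, where it equals `-εδ`. Pairs there at
distance `≍ δ` have mass `≍ δ`, and the pairs at distance `< 1` have mass
`≥ δ ^ p log (1 / 2δ)` since the kernel dominates `δ ^ p / |x - y| ^ 2` when `p ≥ 1`. So for small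
`ε` and `δ` the gains beat the losses.
-/

open Set Real

namespace Idel

section KernelMeasure

noncomputable def kernel (p δ : ℝ) (z : ℝ × ℝ) : ℝ≥0∞ :=
  ENNReal.ofReal (δ ^ p / |z.1 - z.2| ^ (1 + p))

noncomputable def kernelMeasure (p δ : ℝ) : Measure (ℝ × ℝ) :=
  volume.withDensity (kernel p δ)

variable {p δ : ℝ}

@[fun_prop]
lemma measurable_kernel : Measurable (kernel p δ) := by
  unfold kernel; fun_prop

lemma kernel_swap (z : ℝ × ℝ) : kernel p δ z.swap = kernel p δ z := by
  rw [kernel, kernel, Prod.fst_swap, Prod.snd_swap, abs_sub_comm]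

lemma kernelMeasure_apply {S : Set (ℝ × ℝ)} (hS : MeasurableSet S) :
    kernelMeasure p δ S = ∫⁻ x, ∫⁻ y, S.indicator (kernel p δ) (x, y) := by
  rw [kernelMeasure, withDensity_apply _ hS, ← lintegral_indicator hS, Measure.volume_eq_prod,
    lintegral_prod _ (measurable_kernel.indicator hS).aemeasurable]

lemma Idel_le_kernelMeasure {v : ℝ → ℝ} {S : Set (ℝ × ℝ)} (hS : MeasurableSet S)
    (hv : ∀ x y, δ < |v x - v y| → (x, y) ∈ S) : Idel p δ v ≤ kernelMeasure p δ S := by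
  rw [kernelMeasure_apply hS]
  refine lintegral_mono fun x => lintegral_mono fun y => ?_
  split_ifs with h
  · rw [indicator_of_mem (hv x y h)]; rfl
  · exact zero_le

lemma kernelMeasure_le_Idel {v : ℝ → ℝ} {S : Set (ℝ × ℝ)} (hS : MeasurableSet S)
    (hv : ∀ x y, (x, y) ∈ S → δ < |v x - v y|) : kernelMeasure p δ S ≤ Idel p δ v := by
  rw [kernelMeasure_apply hS]
  refine lintegral_mono fun x => lintegral_mono fun y => ?_
  by_cases h : (x, y) ∈ S
  · rw [indicator_of_mem h, if_pos (hv x y h)]; rfl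
  · rw [indicator_of_notMem h]; exact zero_le

lemma kernelMeasure_preimage_swap (S : Set (ℝ × ℝ)) :
    kernelMeasure p δ (Prod.swap ⁻¹' S) = kernelMeasure p δ S := by
  rw [kernelMeasure, withDensity_apply', withDensity_apply', Measure.volume_eq_prod]
  have := (Measure.measurePreserving_swap (μ := (volume : Measure ℝ))
    (ν := (volume : Measure ℝ))).setLIntegral_comp_preimage_emb
    MeasurableEquiv.prodComm.measurableEmbedding (kernel p δ) S
  simpa only [kernel_swap] using this

lemma kernelMeasure_le_mul_volume {S : Set (ℝ × ℝ)} (hS : MeasurableSet S) {C : ℝ≥0∞}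
    (hC : ∀ z ∈ S, kernel p δ z ≤ C) : kernelMeasure p δ S ≤ C * volume S := by
  rw [kernelMeasure, withDensity_apply _ hS, ← setLIntegral_const]
  exact setLIntegral_mono' hS hC

lemma mul_volume_le_kernelMeasure {S : Set (ℝ × ℝ)} (hS : MeasurableSet S) {C : ℝ≥0∞}
    (hC : ∀ z ∈ S, C ≤ kernel p δ z) : C * volume S ≤ kernelMeasure p δ S := by
  rw [kernelMeasure, withDensity_apply _ hS, ← setLIntegral_const]
  exact setLIntegral_mono' hS hC

lemma kernel_le_of_le_abs_sub (hp : -1 ≤ p) (hδ : 0 ≤ δ) {r : ℝ} (hr : 0 < r) {z : ℝ × ℝ}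
    (hz : r ≤ |z.1 - z.2|) : kernel p δ z ≤ ENNReal.ofReal (δ ^ p / r ^ (1 + p)) := by
  refine ENNReal.ofReal_le_ofReal (div_le_div_of_nonneg_left (by positivity) (by positivity) ?_)
  exact rpow_le_rpow hr.le hz (by linarith)

lemma le_kernel_of_abs_sub_le (hp : -1 ≤ p) (hδ : 0 ≤ δ) {R : ℝ} {z : ℝ × ℝ}
    (hz₀ : 0 < |z.1 - z.2|) (hz : |z.1 - z.2| ≤ R) :
    ENNReal.ofReal (δ ^ p / R ^ (1 + p)) ≤ kernel p δ z := by
  refine ENNReal.ofReal_le_ofReal (div_le_div_of_nonneg_left (by positivity) (by positivity) ?_)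
  exact rpow_le_rpow hz₀.le hz (by linarith)

lemma lintegral_indicator_Ici_rpow (hp : 0 < p) (hδ : 0 ≤ δ) {r : ℝ} (hr : 0 < r) :
    ∫⁻ t, (Ici r).indicator (fun t => ENNReal.ofReal (δ ^ p * t ^ (-(1 + p)))) t
      = ENNReal.ofReal (δ ^ p / (p * r ^ p)) := by
  have hint : IntegrableOn (fun t : ℝ => δ ^ p * t ^ (-(1 + p))) (Ioi r) :=
    (integrableOn_Ioi_rpow_of_lt (by linarith) hr).const_mul _
  have hnonneg : 0 ≤ᵐ[volume.restrict (Ioi r)] fun t : ℝ => δ ^ p * t ^ (-(1 + p)) :=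
    (ae_restrict_iff' measurableSet_Ioi).2 (ae_of_all _ fun t ht => by
      have : 0 < t := hr.trans ht
      positivity)
  rw [lintegral_indicator measurableSet_Ici, setLIntegral_congr Ioi_ae_eq_Ici.symm,
    ← ofReal_integral_eq_lintegral_ofReal hint hnonneg, integral_const_mul,
    integral_Ioi_rpow_of_lt (by linarith) hr, show -(1 + p) + 1 = -p by ring, rpow_neg hr.le]
  congr 1
  field_simp

lemma lintegral_kernel_separated_le (hp : 0 < p) (hδ : 0 ≤ δ) {r : ℝ} (hr : 0 < r) (x : ℝ) :
    ∫⁻ y, {z : ℝ × ℝ | r ≤ |z.1 - z.2|}.indicator (kernel p δ) (x, y)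
      ≤ ENNReal.ofReal (2 * (δ ^ p / (p * r ^ p))) := by
  set g : ℝ → ℝ≥0∞ := (Ici r).indicator fun t => ENNReal.ofReal (δ ^ p * t ^ (-(1 + p)))
  have hg : Measurable g := Measurable.indicator (by fun_prop) measurableSet_Ici
  have hsplit : ∀ y, {z : ℝ × ℝ | r ≤ |z.1 - z.2|}.indicator (kernel p δ) (x, y)
      ≤ g (x - y) + g (y - x) := by
    intro y
    by_cases hxy : r ≤ |x - y|
    · rw [indicator_of_mem (show (x, y) ∈ {z : ℝ × ℝ | r ≤ |z.1 - z.2|} from hxy), kernel]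
      dsimp only [g]
      rcases le_abs'.1 hxy with h | h
      · refine le_add_left (le_of_eq ?_)
        rw [indicator_of_mem (show y - x ∈ Ici r by simp only [mem_Ici]; linarith),
          abs_of_neg (by linarith), neg_sub, rpow_neg (by linarith), div_eq_mul_inv]
      · refine le_add_right (le_of_eq ?_)
        rw [indicator_of_mem (show x - y ∈ Ici r from h), abs_of_pos (by linarith),
          rpow_neg (by linarith), div_eq_mul_inv]
    · rw [indicator_of_notMem (show (x, y) ∉ {z : ℝ × ℝ | r ≤ |z.1 - z.2|} from hxy)]
      exact zero_le
  calc ∫⁻ y, {z : ℝ × ℝ | r ≤ |z.1 - z.2|}.indicator (kernel p δ) (x, y)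
      ≤ ∫⁻ y, (g (x - y) + g (y - x)) := lintegral_mono hsplit
    _ = ENNReal.ofReal (δ ^ p / (p * r ^ p)) + ENNReal.ofReal (δ ^ p / (p * r ^ p)) := by
      rw [lintegral_add_left (f := fun y => g (x - y))
        (hg.comp (measurable_const.sub measurable_id)), lintegral_sub_left_eq_self,
        lintegral_sub_right_eq_self, lintegral_indicator_Ici_rpow hp hδ hr]
    _ = ENNReal.ofReal (2 * (δ ^ p / (p * r ^ p))) := by
      rw [← ENNReal.ofReal_add (by positivity) (by positivity), two_mul]

def separatedPairs (W : Set ℝ) (r : ℝ) : Set (ℝ × ℝ) := {z | z.1 ∈ W ∧ r ≤ |z.1 - z.2|}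

lemma measurableSet_separatedPairs {W : Set ℝ} (hW : MeasurableSet W) (r : ℝ) :
    MeasurableSet (separatedPairs W r) :=
  (hW.preimage measurable_fst).inter
    (measurableSet_le measurable_const (measurable_fst.sub measurable_snd).abs)

lemma kernelMeasure_separatedPairs_le (hp : 0 < p) (hδ : 0 ≤ δ) {r : ℝ} (hr : 0 < r)
    {W : Set ℝ} (hW : MeasurableSet W) :
    kernelMeasure p δ (separatedPairs W r)
      ≤ ENNReal.ofReal (2 * (δ ^ p / (p * r ^ p))) * volume W := by
  rw [kernelMeasure_apply (measurableSet_separatedPairs hW r), ← lintegral_indicator_const hW]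
  refine lintegral_mono fun x => ?_
  by_cases hx : x ∈ W
  · rw [indicator_of_mem hx]
    refine le_trans (le_of_eq (lintegral_congr fun y => ?_))
      (lintegral_kernel_separated_le hp hδ hr x)
    simp only [separatedPairs, indicator, mem_ofPred_eq, hx, true_and]
  · simp [separatedPairs, hx]

lemma setLIntegral_Ioo_ofReal {f : ℝ → ℝ} {a b : ℝ} (hab : a ≤ b) (hf : ContinuousOn f (Icc a b))
    (hf₀ : ∀ y ∈ Ioo a b, 0 ≤ f y) :
    ∫⁻ y in Ioo a b, ENNReal.ofReal (f y) = ENNReal.ofReal (∫ y in a..b, f y) := by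
  rw [intervalIntegral.integral_of_le hab, integral_Ioc_eq_integral_Ioo,
    ofReal_integral_eq_lintegral_ofReal (hf.integrableOn_Icc.mono_set Ioo_subset_Icc_self)
      ((ae_restrict_iff' measurableSet_Ioo).2 (ae_of_all _ hf₀))]

lemma integral_inv_sub_sq {x a b : ℝ} (hab : a ≤ b) (hb : b < x) :
    ∫ y in a..b, ((x - y) ^ 2)⁻¹ = (x - b)⁻¹ - (x - a)⁻¹ := by
  have hne : ∀ y ∈ uIcc a b, x - y ≠ 0 := fun y hy => by
    rw [uIcc_of_le hab] at hy; linarith [hy.2]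
  refine intervalIntegral.integral_eq_sub_of_hasDerivAt (f := fun y => (x - y)⁻¹)
    (fun y hy => ?_) (ContinuousOn.intervalIntegrable ?_)
  · refine (((hasDerivAt_id y).const_sub x).inv (hne y hy)).congr_deriv ?_
    simp
  · exact ((continuous_const.sub continuous_id).pow 2).continuousOn.inv₀
      fun y hy => pow_ne_zero 2 (hne y hy)

lemma integral_inv_sub_sub_one {c η : ℝ} (hη : 0 < η) (hη₁ : η ≤ 1) :
    ∫ x in c..c + 1 - η, ((x - (c - η))⁻¹ - 1) = log η⁻¹ - (1 - η) := by
  rw [intervalIntegral.integral_sub (intervalIntegral.intervalIntegrable_inv (fun x hx => ?_)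
      (by fun_prop)) intervalIntegrable_const,
    intervalIntegral.integral_comp_sub_right (fun x => x⁻¹), integral_inv_of_pos (by linarith)
      (by linarith), intervalIntegral.integral_const]
  · simp only [smul_eq_mul, mul_one]
    rw [show c + 1 - η - (c - η) = 1 by ring, show c - (c - η) = η by ring, one_div]
    ring
  · rw [uIcc_of_le (by linarith)] at hx
    linarith [hx.1]

def wedge (c η : ℝ) : Set (ℝ × ℝ) := {z | c < z.1 ∧ z.2 < c - η ∧ z.1 - z.2 < 1}

lemma measurableSet_wedge (c η : ℝ) : MeasurableSet (wedge c η) :=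
  (measurableSet_lt measurable_const measurable_fst).inter
    ((measurableSet_lt measurable_snd measurable_const).inter
      (measurableSet_lt (measurable_fst.sub measurable_snd) measurable_const))

lemma setLIntegral_wedge_inv_sq {c η : ℝ} (hη : 0 < η) (hη₁ : η < 1) :
    ∫⁻ z in wedge c η, ENNReal.ofReal (((z.1 - z.2) ^ 2)⁻¹)
      = ENNReal.ofReal (log η⁻¹ - (1 - η)) := by
  have hslice : ∀ x, ∫⁻ y, (wedge c η).indicator
        (fun z => ENNReal.ofReal (((z.1 - z.2) ^ 2)⁻¹)) (x, y)
      = (Ioo c (c + 1 - η)).indicator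
          (fun x => ENNReal.ofReal ((x - (c - η))⁻¹ - 1)) x := by
    intro x
    have hrow : ∀ y,
        (wedge c η).indicator (fun z => ENNReal.ofReal (((z.1 - z.2) ^ 2)⁻¹)) (x, y)
        = (Ioo c (c + 1 - η)).indicator (fun x => (Ioo (x - 1) (c - η)).indicator
            (fun y => ENNReal.ofReal (((x - y) ^ 2)⁻¹)) y) x := by
      intro y
      simp only [indicator_apply, wedge, mem_ofPred_eq, mem_Ioo]
      split_ifs <;> first | rfl | (exfalso; grind)
    simp_rw [hrow]
    by_cases hx : x ∈ Ioo c (c + 1 - η)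
    · have hx' := mem_Ioo.1 hx
      simp only [indicator_of_mem hx]
      rw [lintegral_indicator measurableSet_Ioo, setLIntegral_Ioo_ofReal (by linarith) ?_ ?_,
        integral_inv_sub_sq (by linarith) (by linarith), sub_sub_cancel, inv_one]
      · exact ((continuous_const.sub continuous_id).pow 2).continuousOn.inv₀
          fun y hy => pow_ne_zero 2 (sub_pos.2 (by linarith [hy.2] : y < x)).ne'
      · exact fun y _ => by positivity
    · simp [indicator_of_notMem hx]
  rw [← lintegral_indicator (measurableSet_wedge c η), Measure.volume_eq_prod,
    lintegral_prod _ (Measurable.indicator (by fun_prop) (measurableSet_wedge c η)).aemeasurable]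
  simp_rw [hslice]
  rw [lintegral_indicator measurableSet_Ioo, setLIntegral_Ioo_ofReal (by linarith) ?_ ?_,
    integral_inv_sub_sub_one hη hη₁.le]
  · exact (((continuous_id.sub continuous_const).continuousOn.inv₀ fun x hx =>
      (sub_pos.2 (by linarith [hx.1] : c - η < x)).ne').sub continuousOn_const)
  · intro x hx
    exact sub_nonneg.2 ((one_le_inv₀ (by linarith [hx.1])).2 (by linarith [hx.2]))

lemma ofReal_log_le_kernelMeasure_wedge (hp : 1 ≤ p) (hδ : 0 ≤ δ) {c η : ℝ} (hη : 0 < η)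
    (hη₁ : η < 1) :
    ENNReal.ofReal (δ ^ p * (log η⁻¹ - (1 - η))) ≤ kernelMeasure p δ (wedge c η) := by
  rw [ENNReal.ofReal_mul (by positivity), ← setLIntegral_wedge_inv_sq hη hη₁,
    ← lintegral_const_mul _ (by fun_prop), kernelMeasure,
    withDensity_apply _ (measurableSet_wedge c η)]
  refine setLIntegral_mono' (measurableSet_wedge c η) fun z ⟨hz₁, hz₂, hz₃⟩ => ?_
  have hd : 0 < z.1 - z.2 := by linarith
  rw [← ENNReal.ofReal_mul (by positivity), kernel, abs_of_pos hd, ← div_eq_mul_inv]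
  refine ENNReal.ofReal_le_ofReal (div_le_div_of_nonneg_left (by positivity) (by positivity) ?_)
  rw [← rpow_two]
  exact rpow_le_rpow_of_exponent_ge hd hz₃.le (by linarith)

end KernelMeasure

section Counterexample

variable {p δ ε x y : ℝ}

lemma uEx_eq (hδ : 0 < δ) : uEx δ ε x =
    if -2 < x ∧ x ≤ -1 then δ
    else if -1 < x ∧ x < -1 + δ then δ - (x + 1) * (1 + 2 * ε)
    else if -1 + δ ≤ x ∧ x < 0 then -2 * ε * δ
    else if 0 < x ∧ x < 1 then -ε * δ
    else if 1 < x ∧ x < 2 then δ - ε * δ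
    else 0 := by
  simp only [uEx]
  split_ifs <;> first | rfl | (field_simp; ring)

lemma uEx_eq_zero_of_notMem (hδ : 0 < δ) (hδ₁ : δ < 1) (hx : x ∉ Ioo (-2) 2) : uEx δ ε x = 0 := by
  rw [mem_Ioo] at hx
  rw [uEx_eq hδ]; split_ifs <;> first | rfl | grind

lemma uEx_mem_Icc_of_neg (hδ : 0 < δ) (hε : 0 < ε) (hx : x ∈ Ioo (-2) 0) :
    uEx δ ε x ∈ Icc (-2 * ε * δ) δ := by
  rw [mem_Ioo] at hx
  rw [uEx_eq hδ, mem_Icc]; split_ifs <;> constructor <;> nlinarith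

lemma uEx_mem_Icc_of_mem_Ico (hδ : 0 < δ) (hδ' : δ ≤ 1 / 2) (hε : 0 < ε) (hx : x ∈ Ico (-1 / 2) 1) :
    uEx δ ε x ∈ Icc (-2 * ε * δ) 0 := by
  rw [mem_Ico] at hx
  rw [uEx_eq hδ, mem_Icc]; split_ifs <;> constructor <;> nlinarith

lemma uEx_mem_Icc_of_gt (hδ : 0 < δ) (hδ₁ : δ < 1) (hε : 0 < ε) (hε' : ε ≤ 1) (hx : 1 / 2 < x) :
    uEx δ ε x ∈ Icc (-ε * δ) (δ - ε * δ) := by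
  rw [uEx_eq hδ, mem_Icc]; split_ifs <;> constructor <;> nlinarith

lemma abs_uEx_le (hδ : 0 < δ) (hε : 0 < ε) (hε' : ε ≤ 1 / 2) (x : ℝ) : |uEx δ ε x| ≤ δ := by
  rw [uEx_eq hδ, abs_le]; split_ifs <;> constructor <;> nlinarith

lemma lt_of_lt_uEx (hδ : 0 < δ) (hε : 0 < ε) (hε' : ε < 1 / 2) (hx : x ∈ Ioo (-2) 0)
    (hu : δ - 2 * ε * δ < uEx δ ε x) : x < -1 + 2 * ε * δ := by
  rw [mem_Ioo] at hx
  rw [uEx_eq hδ] at hu; split_ifs at hu <;> nlinarith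

lemma lt_of_uEx_neg (hδ : 0 < δ) (hε : 0 < ε) (hx : x ∈ Ioo (-2) 0)
    (hu : uEx δ ε x < 0) : -1 + δ - 2 * ε * δ < x := by
  rw [mem_Ioo] at hx
  rw [uEx_eq hδ] at hu; split_ifs at hu <;> nlinarith

lemma polar1d_uEx_of_mem_Ioo_neg (hδ : 0 < δ) (hδ₁ : δ < 1) (hε : 0 < ε)
    (hx : x ∈ Ioo (-2) (-1)) : polar1d (uEx δ ε) x = δ - ε * δ := by
  rw [mem_Ioo] at hx
  rw [polar1d, if_neg (by linarith), uEx_eq hδ, uEx_eq hδ]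
  split_ifs <;> first | (exfalso; grind) | exact min_eq_right (by nlinarith)

lemma polar1d_uEx_of_mem_Ico (hδ : 0 < δ) (hδ₁ : δ < 1) (hε : 0 < ε)
    (hx : x ∈ Ico (-1 + δ) 0) : polar1d (uEx δ ε) x = -2 * ε * δ := by
  rw [mem_Ico] at hx
  rw [polar1d, if_neg (by linarith), uEx_eq hδ, uEx_eq hδ]
  split_ifs <;> first | (exfalso; grind) | exact min_eq_left (by nlinarith)

lemma polar1d_uEx_of_mem_Ioo (hδ : 0 < δ) (hδ₁ : δ < 1) (hε : 0 < ε)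
    (hx : x ∈ Ioo 1 2) : polar1d (uEx δ ε) x = δ := by
  rw [mem_Ioo] at hx
  rw [polar1d, if_pos (by linarith), uEx_eq hδ, uEx_eq hδ]
  split_ifs <;> first | (exfalso; grind) | exact max_eq_right (by nlinarith)

lemma polar1d_uEx_of_mem_Ioc (hδ : 0 < δ) (hδ₁ : δ < 1) (hε : 0 < ε)
    (hx : x ∈ Ioc 0 (1 - δ)) : polar1d (uEx δ ε) x = -ε * δ := by
  rw [mem_Ioc] at hx
  rw [polar1d, if_pos (by linarith), uEx_eq hδ, uEx_eq hδ]
  split_ifs <;> first | (exfalso; grind) | exact max_eq_left (by nlinarith)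

-- Contains `-1`, the right end of the plateau where `uEx δ ε = δ`.
def rampEnds (δ ε : ℝ) : Set ℝ :=
  Ico (-1) (-1 + 2 * ε * δ) ∪ Ioo (-1 + δ - 2 * ε * δ) (-1 + δ)

def plateauPairs (δ : ℝ) : Set (ℝ × ℝ) :=
  Ioo (-2) (-1) ×ˢ Ico (-1 + δ) 0 ∪ Ico (-1 + δ) 0 ×ˢ Ioo (-2) (-1)

def rampPairs (δ ε : ℝ) : Set (ℝ × ℝ) :=
  separatedPairs (rampEnds δ ε) (δ / 2) ∪ Prod.swap ⁻¹' separatedPairs (rampEnds δ ε) (δ / 2)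

def farPairs : Set (ℝ × ℝ) := Ioo (-2) 2 ×ˢ Ioo (-2) 2 ∩ {z | 1 / 2 ≤ |z.1 - z.2|}

def nearPairs (δ : ℝ) : Set (ℝ × ℝ) := Ioo 1 (1 + δ) ×ˢ Ioo (1 - 2 * δ) (1 - δ)

lemma measurableSet_plateauPairs : MeasurableSet (plateauPairs δ) :=
  (measurableSet_Ioo.prod measurableSet_Ico).union (measurableSet_Ico.prod measurableSet_Ioo)

lemma measurableSet_rampEnds : MeasurableSet (rampEnds δ ε) :=
  measurableSet_Ico.union measurableSet_Ioo

lemma measurableSet_rampPairs : MeasurableSet (rampPairs δ ε) :=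
  have h := measurableSet_separatedPairs measurableSet_rampEnds (δ / 2)
  h.union (h.preimage measurable_swap)

lemma measurableSet_farPairs : MeasurableSet farPairs :=
  (measurableSet_Ioo.prod measurableSet_Ioo).inter
    (measurableSet_le measurable_const (measurable_fst.sub measurable_snd).abs)

lemma measurableSet_nearPairs : MeasurableSet (nearPairs δ) :=
  measurableSet_Ioo.prod measurableSet_Ioo

lemma preimage_swap_plateauPairs_union_rampPairs :
    Prod.swap ⁻¹' (plateauPairs δ ∪ rampPairs δ ε) = plateauPairs δ ∪ rampPairs δ ε := by
  ext ⟨x, y⟩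
  simp only [plateauPairs, rampPairs, mem_preimage, mem_union, mem_prod, Prod.swap_prod_mk]
  tauto

lemma abs_uEx_sub_le_of_nonneg (hδ : 0 < δ) (hδ' : δ ≤ 1 / 2) (hε : 0 < ε) (hε' : ε ≤ 1 / 2)
    (hx : 0 ≤ x) (hxy : |x - y| < 1 / 2) : |uEx δ ε x - uEx δ ε y| ≤ δ := by
  rw [abs_lt] at hxy
  rw [abs_sub_le_iff]
  by_cases h : x < 1 ∧ y < 1
  · have hux := uEx_mem_Icc_of_mem_Ico hδ hδ' hε (x := x) ⟨by linarith, h.1⟩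
    have huy := uEx_mem_Icc_of_mem_Ico hδ hδ' hε (x := y) ⟨by linarith, h.2⟩
    constructor <;> nlinarith [hux.1, hux.2, huy.1, huy.2]
  · have hx' : 1 / 2 < x := by grind
    have hy' : 1 / 2 < y := by grind
    have hux := uEx_mem_Icc_of_gt hδ (by linarith) hε (by linarith) hx'
    have huy := uEx_mem_Icc_of_gt hδ (by linarith) hε (by linarith) hy'
    constructor <;> nlinarith [hux.1, hux.2, huy.1, huy.2]

lemma mem_plateauPairs_union_rampPairs_of_lt_sub (hδ : 0 < δ) (hε : 0 < ε) (hε' : ε < 1 / 8)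
    (hx : x ∈ Ioo (-2) 0) (hy : y ∈ Ioo (-2) 0) (h : δ < uEx δ ε x - uEx δ ε y) :
    (x, y) ∈ plateauPairs δ ∪ rampPairs δ ε := by
  -- `uEx δ ε` ranges over `[-2εδ, δ]` on `(-2, 0)`, so `uEx δ ε x > δ - 2εδ` and `uEx δ ε y < 0`.
  have hux := uEx_mem_Icc_of_neg hδ hε hx
  have huy := uEx_mem_Icc_of_neg hδ hε hy
  have hx' := lt_of_lt_uEx hδ hε (by linarith) hx (by linarith [huy.1])
  have hy' := lt_of_uEx_neg hδ hε hy (by linarith [hux.2])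
  have hsep : δ / 2 ≤ |x - y| := by
    rw [abs_sub_comm]; exact le_abs.2 (Or.inl (by nlinarith))
  by_cases hxA : x < -1
  · by_cases hyB : -1 + δ ≤ y
    · exact Or.inl (Or.inl ⟨⟨hx.1, hxA⟩, hyB, hy.2⟩)
    · refine Or.inr (Or.inr ⟨Or.inr ⟨hy', not_le.1 hyB⟩, ?_⟩)
      rwa [abs_sub_comm]
  · exact Or.inr (Or.inl ⟨Or.inl ⟨not_lt.1 hxA, hx'⟩, hsep⟩)

lemma mem_plateauPairs_union_rampPairs_union_farPairs (hδ : 0 < δ) (hδ' : δ < 1 / 8)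
    (hε : 0 < ε) (hε' : ε < 1 / 8) (h : δ < |uEx δ ε x - uEx δ ε y|) :
    (x, y) ∈ plateauPairs δ ∪ rampPairs δ ε ∪ farPairs := by
  have hsupp : ∀ {a b : ℝ}, δ < |uEx δ ε a - uEx δ ε b| → a ∈ Ioo (-2) 2 := by
    intro a b hab
    by_contra ha
    rw [uEx_eq_zero_of_notMem hδ (by linarith) ha, zero_sub, abs_neg] at hab
    exact hab.not_ge (abs_uEx_le hδ hε (by linarith) b)
  have h' : δ < |uEx δ ε y - uEx δ ε x| := by rwa [abs_sub_comm]
  have hx₂ := hsupp h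
  have hy₂ := hsupp h'
  by_cases hfar : 1 / 2 ≤ |x - y|
  · exact Or.inr ⟨⟨hx₂, hy₂⟩, hfar⟩
  have hnear := not_le.1 hfar
  have hx : x < 0 := not_le.1 fun hx => h.not_ge
    (abs_uEx_sub_le_of_nonneg hδ (by linarith) hε (by linarith) hx hnear)
  have hy : y < 0 := not_le.1 fun hy => h'.not_ge
    (abs_uEx_sub_le_of_nonneg hδ (by linarith) hε (by linarith) hy (by rwa [abs_sub_comm]))
  refine Or.inl ?_
  rcases lt_abs.1 h with hxy | hyx
  · exact mem_plateauPairs_union_rampPairs_of_lt_sub hδ hε hε' ⟨hx₂.1, hx⟩ ⟨hy₂.1, hy⟩ hxy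
  · rw [← preimage_swap_plateauPairs_union_rampPairs]
    exact mem_plateauPairs_union_rampPairs_of_lt_sub hδ hε hε' ⟨hy₂.1, hy⟩ ⟨hx₂.1, hx⟩ (by linarith)

lemma lt_abs_polar1d_uEx_sub (hδ : 0 < δ) (hδ' : δ < 1 / 2) (hε : 0 < ε)
    (h : (x, y) ∈ plateauPairs δ ∪ nearPairs δ ∪ wedge 1 (2 * δ)) :
    δ < |polar1d (uEx δ ε) x - polar1d (uEx δ ε) y| := by
  have hδ₁ : δ < 1 := by linarith
  have hjump : ∀ {a b : ℝ}, a ∈ Ioo 1 2 → b ∈ Ioc 0 (1 - δ) →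
      δ < |polar1d (uEx δ ε) a - polar1d (uEx δ ε) b| := fun ha hb => by
    rw [polar1d_uEx_of_mem_Ioo hδ hδ₁ hε ha, polar1d_uEx_of_mem_Ioc hδ hδ₁ hε hb]
    exact lt_abs.2 (Or.inl (by nlinarith))
  rcases h with ((⟨hx, hy⟩ | ⟨hx, hy⟩) | ⟨hx, hy⟩) | ⟨hx, hy, hxy⟩
  · rw [polar1d_uEx_of_mem_Ioo_neg hδ hδ₁ hε hx, polar1d_uEx_of_mem_Ico hδ hδ₁ hε hy]
    exact lt_abs.2 (Or.inl (by nlinarith))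
  · rw [polar1d_uEx_of_mem_Ico hδ hδ₁ hε hx, polar1d_uEx_of_mem_Ioo_neg hδ hδ₁ hε hy]
    exact lt_abs.2 (Or.inr (by nlinarith))
  · exact hjump ⟨hx.1, by linarith [hx.2]⟩ ⟨by linarith [hy.1], hy.2.le⟩
  · exact hjump ⟨hx, by linarith⟩ ⟨by linarith, by linarith⟩

lemma kernelMeasure_plateauPairs_ne_top (hp : -1 ≤ p) (hδ : 0 < δ) :
    kernelMeasure p δ (plateauPairs δ) ≠ ⊤ := by
  have hb : Bornology.IsBounded (plateauPairs δ) :=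
    ((Metric.isBounded_Ioo _ _).prod (Metric.isBounded_Ico _ _)).union
      ((Metric.isBounded_Ico _ _).prod (Metric.isBounded_Ioo _ _))
  refine ne_top_of_le_ne_top (ENNReal.mul_ne_top ENNReal.ofReal_ne_top hb.measure_lt_top.ne)
    (kernelMeasure_le_mul_volume measurableSet_plateauPairs fun z hz =>
      kernel_le_of_le_abs_sub hp hδ.le hδ ?_)
  rcases hz with ⟨hx, hy⟩ | ⟨hx, hy⟩
  · rw [abs_sub_comm]; exact le_abs.2 (Or.inl (by linarith [hx.2, hy.1]))
  · exact le_abs.2 (Or.inl (by linarith [hx.1, hy.2]))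

lemma kernelMeasure_rampPairs_le (hp : 0 < p) (hδ : 0 < δ) (hε : 0 < ε) :
    kernelMeasure p δ (rampPairs δ ε) ≤ ENNReal.ofReal (16 * 2 ^ p / p * ε * δ) := by
  have hvol : volume (rampEnds δ ε) ≤ ENNReal.ofReal (4 * ε * δ) := by
    refine (measure_union_le _ _).trans (le_of_eq ?_)
    rw [Real.volume_Ico, Real.volume_Ioo, ← ENNReal.ofReal_add (by nlinarith) (by nlinarith)]
    ring_nf
  have hT : 2 * (δ ^ p / (p * (δ / 2) ^ p)) = 2 * 2 ^ p / p := by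
    rw [div_rpow hδ.le zero_le_two]
    field_simp
  calc kernelMeasure p δ (rampPairs δ ε)
        ≤ kernelMeasure p δ (separatedPairs (rampEnds δ ε) (δ / 2))
          + kernelMeasure p δ (separatedPairs (rampEnds δ ε) (δ / 2)) := by
        nth_rw 3 [← kernelMeasure_preimage_swap]
        exact measure_union_le (μ := kernelMeasure p δ) _ _
    _ ≤ 2 * (ENNReal.ofReal (2 * 2 ^ p / p) * ENNReal.ofReal (4 * ε * δ)) := by
      rw [← two_mul, ← hT]
      gcongr
      exact (kernelMeasure_separatedPairs_le hp hδ.le (by positivity) measurableSet_rampEnds).trans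
        (by gcongr)
    _ = ENNReal.ofReal (16 * 2 ^ p / p * ε * δ) := by
      rw [← ENNReal.ofReal_mul (by positivity), ← ENNReal.ofReal_ofNat 2,
        ← ENNReal.ofReal_mul zero_le_two]
      ring_nf

lemma ofReal_le_kernelMeasure_nearPairs (hp : -1 ≤ p) (hδ : 0 < δ) :
    ENNReal.ofReal (δ / 3 ^ (1 + p)) ≤ kernelMeasure p δ (nearPairs δ) := by
  have hvol : volume (nearPairs δ) = ENNReal.ofReal (δ * δ) := by
    rw [nearPairs, Measure.volume_eq_prod, Measure.prod_prod, Real.volume_Ioo, Real.volume_Ioo,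
      ← ENNReal.ofReal_mul (by linarith)]
    ring_nf
  have hval : δ / 3 ^ (1 + p) = δ ^ p / (3 * δ) ^ (1 + p) * (δ * δ) := by
    rw [mul_rpow zero_le_three hδ.le, rpow_add hδ, rpow_one]
    field_simp
  rw [hval, ENNReal.ofReal_mul (by positivity), ← hvol]
  refine mul_volume_le_kernelMeasure measurableSet_nearPairs fun z ⟨hx, hy⟩ => ?_
  have hd : 0 < z.1 - z.2 := by linarith [hx.1, hy.2]
  exact le_kernel_of_abs_sub_le hp hδ.le (abs_pos.2 hd.ne')
    (by rw [abs_of_pos hd]; linarith [hx.2, hy.1])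

lemma kernelMeasure_farPairs_le (hp : -1 ≤ p) (hδ : 0 ≤ δ) :
    kernelMeasure p δ farPairs ≤ ENNReal.ofReal (16 * 2 ^ (1 + p) * δ ^ p) := by
  have hvol : volume farPairs ≤ ENNReal.ofReal 16 := by
    refine (measure_mono inter_subset_left).trans (le_of_eq ?_)
    rw [Measure.volume_eq_prod, Measure.prod_prod, Real.volume_Ioo, ← ENNReal.ofReal_mul]
    · norm_num
    · norm_num
  have hval : 16 * 2 ^ (1 + p) * δ ^ p = δ ^ p / (1 / 2) ^ (1 + p) * 16 := by
    rw [div_rpow zero_le_one zero_le_two, one_rpow]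
    field_simp
  rw [hval, ENNReal.ofReal_mul (by positivity)]
  exact (kernelMeasure_le_mul_volume measurableSet_farPairs fun z hz =>
    kernel_le_of_le_abs_sub hp hδ (by norm_num) hz.2).trans (by gcongr)

lemma measure_plateauPairs_union_nearPairs_union_wedge (μ : Measure (ℝ × ℝ)) :
    μ (plateauPairs δ ∪ nearPairs δ ∪ wedge 1 (2 * δ))
      = μ (plateauPairs δ) + (μ (nearPairs δ) + μ (wedge 1 (2 * δ))) := by
  have hP : ∀ z ∈ plateauPairs δ, z.1 < 0 := by
    rintro z (⟨hx, -⟩ | ⟨hx, -⟩)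
    · linarith [hx.2]
    · exact hx.2
  rw [measure_union _ (measurableSet_wedge 1 (2 * δ)), measure_union _ measurableSet_nearPairs,
    add_assoc]
  · exact disjoint_left.2 fun z hzP hzN => by linarith [hP z hzP, hzN.1.1]
  · refine disjoint_left.2 fun z hz hzW => ?_
    rcases hz with hzP | hzN
    · linarith [hP z hzP, hzW.1]
    · linarith [hzN.2.1, hzW.2.1]

lemma kernelMeasure_rampPairs_lt_nearPairs (hp : 1 ≤ p) (hδ : 0 < δ) (hε : 0 < ε)
    (hεp : ε < p / (16 * 2 ^ p * 3 ^ (1 + p))) :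
    kernelMeasure p δ (rampPairs δ ε) < kernelMeasure p δ (nearPairs δ) := by
  have hp₀ : 0 < p := by linarith
  refine (kernelMeasure_rampPairs_le hp₀ hδ hε).trans_lt
    (lt_of_lt_of_le ?_ (ofReal_le_kernelMeasure_nearPairs (by linarith) hδ))
  rw [ENNReal.ofReal_lt_ofReal_iff (by positivity)]
  have hεp' : 16 * 2 ^ p * ε * 3 ^ (1 + p) < p := by
    linarith [(lt_div_iff₀ (by positivity)).1 hεp]
  calc 16 * 2 ^ p / p * ε * δ = 16 * 2 ^ p * ε * 3 ^ (1 + p) / p * (δ / 3 ^ (1 + p)) := by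
        field_simp
    _ < 1 * (δ / 3 ^ (1 + p)) := by
        gcongr
        rwa [div_lt_one hp₀]
    _ = δ / 3 ^ (1 + p) := one_mul _

lemma kernelMeasure_farPairs_lt_wedge (hp : 1 ≤ p) (hδ : 0 < δ) (hδ' : δ < 1 / 2)
    (hlog : 16 * 2 ^ (1 + p) + 1 < log (2 * δ)⁻¹) :
    kernelMeasure p δ farPairs < kernelMeasure p δ (wedge 1 (2 * δ)) := by
  refine (kernelMeasure_farPairs_le (by linarith) hδ.le).trans_lt
    (lt_of_lt_of_le ?_ (ofReal_log_le_kernelMeasure_wedge hp hδ.le (by linarith) (by linarith)))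
  have hδp : 0 < δ ^ p := rpow_pos_of_pos hδ p
  have hgap : 16 * 2 ^ (1 + p) < log (2 * δ)⁻¹ - (1 - 2 * δ) := by linarith
  have h2p : 0 < (2 : ℝ) ^ (1 + p) := by positivity
  rw [ENNReal.ofReal_lt_ofReal_iff (mul_pos hδp (by linarith)), mul_comm _ (δ ^ p)]
  exact mul_lt_mul_of_pos_left hgap hδp

lemma Idel_uEx_le (hδ : 0 < δ) (hδ' : δ < 1 / 8) (hε : 0 < ε) (hε' : ε < 1 / 8) :
    Idel p δ (uEx δ ε) ≤ kernelMeasure p δ (plateauPairs δ)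
      + (kernelMeasure p δ (rampPairs δ ε) + kernelMeasure p δ farPairs) := by
  refine (Idel_le_kernelMeasure
    (measurableSet_plateauPairs.union measurableSet_rampPairs |>.union measurableSet_farPairs)
    fun _ _ h => mem_plateauPairs_union_rampPairs_union_farPairs hδ hδ' hε hε' h).trans ?_
  rw [← add_assoc]
  exact (measure_union_le _ _).trans (add_le_add_left (measure_union_le _ _) _)

lemma le_Idel_polar1d_uEx (hδ : 0 < δ) (hδ' : δ < 1 / 2) (hε : 0 < ε) :
    kernelMeasure p δ (plateauPairs δ)
      + (kernelMeasure p δ (nearPairs δ) + kernelMeasure p δ (wedge 1 (2 * δ)))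
      ≤ Idel p δ (polar1d (uEx δ ε)) := by
  rw [← measure_plateauPairs_union_nearPairs_union_wedge]
  exact kernelMeasure_le_Idel
    (measurableSet_plateauPairs.union measurableSet_nearPairs |>.union (measurableSet_wedge 1 _))
    fun _ _ h => lt_abs_polar1d_uEx_sub hδ hδ' hε h

end Counterexample

end Idel

open Idel

/-- For `p ≥ 1` and `δ, ε > 0` sufficiently small, the polarization of the
counterexample function strictly increases `I_δ`. -/
theorem Idel_increases_under_polarization (p : ℝ) (hp : 1 ≤ p) :
    ∃ δ₀ > (0 : ℝ), ∃ ε₀ > (0 : ℝ), ∀ δ ε : ℝ, 0 < δ → δ < δ₀ → 0 < ε → ε < ε₀ →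
      Idel p δ (uEx δ ε) < Idel p δ (polar1d (uEx δ ε)) := by
  refine ⟨min (1 / 8) (exp (-(16 * 2 ^ (1 + p) + 1)) / 2), by positivity,
    min (1 / 8) (p / (16 * 2 ^ p * 3 ^ (1 + p))), lt_min (by norm_num) (by positivity),
    fun δ ε hδ hδ₀ hε hε₀ => ?_⟩
  have hδ' : δ < 1 / 8 := hδ₀.trans_le (min_le_left _ _)
  have hε' : ε < 1 / 8 := hε₀.trans_le (min_le_left _ _)
  have hlog : 16 * 2 ^ (1 + p) + 1 < log (2 * δ)⁻¹ := by
    rw [log_inv, lt_neg, ← log_exp (-(16 * 2 ^ (1 + p) + 1))]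
    exact log_lt_log (by positivity) (by linarith [hδ₀.trans_le (min_le_right _ _)])
  calc Idel p δ (uEx δ ε)
      ≤ kernelMeasure p δ (plateauPairs δ)
          + (kernelMeasure p δ (rampPairs δ ε) + kernelMeasure p δ farPairs) :=
        Idel_uEx_le hδ hδ' hε hε'
    _ < kernelMeasure p δ (plateauPairs δ)
          + (kernelMeasure p δ (nearPairs δ) + kernelMeasure p δ (wedge 1 (2 * δ))) :=
        ENNReal.add_lt_add_left (kernelMeasure_plateauPairs_ne_top (by linarith) hδ)
          (ENNReal.add_lt_add
            (kernelMeasure_rampPairs_lt_nearPairs hp hδ hε (hε₀.trans_le (min_le_right _ _)))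
            (kernelMeasure_farPairs_lt_wedge hp hδ (by linarith) hlog))
    _ ≤ Idel p δ (polar1d (uEx δ ε)) := le_Idel_polar1d_uEx hδ (by linarith) hε
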